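/- If E|X| < ∞, then the complete measure of mutual dependence Q(X) = ∫_{ℝ^p} |φ_X(t) − φ_{X̃}(t)|² w₁(t) dt is finite (and nonnegative). -/

import Mathlib

/-! Since `‖φ‖ ≤ 1`, the difference `φ_X − φ_X̃` is bounded by `2`; since `‖e^{ix} − 1‖ ≤ |x|` and
`‖∏ aⱼ − 1‖ ≤ ∑ ‖aⱼ − 1‖` when all `‖aⱼ‖ ≤ 1`, it is also bounded by `(d + 1) E|X| |t|`. Hence the
integrand is `O(min(1, |t|²) / |t|^{p+1})`, which in polar coordinates becomes
`min(1, r²) / r² ≤ 2 / (1 + r²)`, an integrable function on `(0, ∞)`. -/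

open MeasureTheory ProbabilityTheory Complex Filter
open scoped RealInnerProductSpace

noncomputable section

/-- The constant `K_q = π^{(q+1)/2} / Γ((q+1)/2)`. -/
def Kconst (q : ℕ) : ℝ :=
  Real.pi ^ ((q + 1 : ℝ) / 2) / Real.Gamma ((q + 1 : ℝ) / 2)

/-- The index set of `ℝ^p = ℝ^{p_1} × ⋯ × ℝ^{p_d}`. -/
abbrev Idx (d : ℕ) (p : Fin d → ℕ) := (j : Fin d) × Fin (p j)

/-- The space `ℝ^p = ℝ^{p_1} × ⋯ × ℝ^{p_d}` with its Euclidean structure. -/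
abbrev Vec (d : ℕ) (p : Fin d → ℕ) := EuclideanSpace ℝ (Idx d p)

/-- The `j`-th component `x_j ∈ ℝ^{p_j}` of `x ∈ ℝ^p`. -/
def comp {d : ℕ} {p : Fin d → ℕ} (x : Vec d p) (j : Fin d) :
    EuclideanSpace ℝ (Fin (p j)) := WithLp.toLp 2 (fun i => x ⟨j, i⟩)

/-- Concatenation `(y_1, …, y_d) ∈ ℝ^p` of vectors `y_j ∈ ℝ^{p_j}`. -/
def concat {d : ℕ} {p : Fin d → ℕ}
    (y : ∀ j : Fin d, EuclideanSpace ℝ (Fin (p j))) : Vec d p := WithLp.toLp 2 (fun i : Idx d p => y i.1 i.2)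

/-- The weight function `w₁(t) = (K_p |t|^{p+1})⁻¹` on `ℝ^p`. -/
def w1 (d : ℕ) (p : Fin d → ℕ) (t : Vec d p) : ℝ :=
  (Kconst (∑ j, p j) * ‖t‖ ^ (∑ j, p j + 1))⁻¹

/-- The characteristic function `φ_Y(t) = E[exp(i⟨t, Y⟩)]` of a random vector `Y`. -/
def charF {Ω : Type*} [MeasurableSpace Ω] (μ : Measure Ω) {ι : Type*} [Fintype ι]
    (Y : Ω → EuclideanSpace ℝ ι) (t : EuclideanSpace ℝ ι) : ℂ :=
  ∫ ω, Complex.exp ((⟪t, Y ω⟫ : ℝ) * Complex.I) ∂μ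

/-- The product of the marginal characteristic functions,
`φ_X̃(t) = ∏ⱼ φ_{X_j}(t_j)`. -/
def charProd {Ω : Type*} [MeasurableSpace Ω] (μ : Measure Ω) {d : ℕ} {p : Fin d → ℕ}
    (X : Ω → Vec d p) (t : Vec d p) : ℂ :=
  ∏ j, charF μ (fun ω => comp (X ω) j) (comp t j)

/-- The complete measure of mutual dependence
`Q(X) = ∫ |φ_X(t) − φ_X̃(t)|² w₁(t) dt`. -/
def Qmeas {Ω : Type*} [MeasurableSpace Ω] (μ : Measure Ω) {d : ℕ} {p : Fin d → ℕ}
    (X : Ω → Vec d p) : ℝ :=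
  ∫ t : Vec d p, ‖charF μ X t - charProd μ X t‖ ^ 2 * w1 d p t


lemma norm_prod_sub_one_le_sum {ι R : Type*} [SeminormedCommRing R] (s : Finset ι) {f : ι → R}
    (hf : ∀ i ∈ s, ‖f i‖ ≤ 1) : ‖∏ i ∈ s, f i - 1‖ ≤ ∑ i ∈ s, ‖f i - 1‖ := by
  induction s using Finset.cons_induction with
  | empty => simp
  | cons a s _ ih =>
    rw [Finset.prod_cons, Finset.sum_cons,
      show f a * ∏ i ∈ s, f i - 1 = f a * (∏ i ∈ s, f i - 1) + (f a - 1) by ring, add_comm]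
    refine (norm_add_le _ _).trans (add_le_add_right ?_ _)
    calc ‖f a * (∏ i ∈ s, f i - 1)‖ ≤ ‖f a‖ * ‖∏ i ∈ s, f i - 1‖ := norm_mul_le _ _
      _ ≤ 1 * ∑ i ∈ s, ‖f i - 1‖ := by
        gcongr
        · exact hf a (Finset.mem_cons_self a s)
        · exact ih fun i hi => hf i (Finset.mem_cons_of_mem hi)
      _ = ∑ i ∈ s, ‖f i - 1‖ := one_mul _

lemma min_one_sq_div_sq_le (y : ℝ) : min 1 (y ^ 2) / y ^ 2 ≤ 2 * (1 + y ^ 2)⁻¹ := by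
  rcases eq_or_ne y 0 with rfl | hy
  · simp
  have hy2 : 0 < y ^ 2 := by positivity
  rw [div_le_iff₀ hy2, ← div_eq_mul_inv, mul_comm, ← mul_div_assoc, le_div_iff₀ (by positivity)]
  rcases le_total 1 (y ^ 2) with h | h
  · rw [min_eq_left h]; nlinarith
  · rw [min_eq_right h]; nlinarith

lemma integrable_min_one_sq_div_norm_pow {E : Type*} [NormedAddCommGroup E] [NormedSpace ℝ E]
    [MeasurableSpace E] [BorelSpace E] [FiniteDimensional ℝ E] (μ : Measure E)
    [μ.IsAddHaarMeasure] :
    Integrable (fun x : E => min 1 (‖x‖ ^ 2) / ‖x‖ ^ (Module.finrank ℝ E + 1)) μ := by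
  rcases subsingleton_or_nontrivial E with _ | _
  · simp [Subsingleton.elim _ (0 : E)]
  set n := Module.finrank ℝ E
  have hn : 0 < n := Module.finrank_pos
  refine (integrable_fun_norm_addHaar μ (f := fun r => min 1 (r ^ 2) / r ^ (n + 1))).2 ?_
  refine Integrable.mono' (integrable_inv_one_add_sq.const_mul 2).integrableOn (by fun_prop) ?_
  refine (ae_restrict_mem measurableSet_Ioi).mono fun y (hy : 0 < y) => ?_
  have hpow : y ^ (n + 1) = y ^ (n - 1) * y ^ 2 := by
    rw [← pow_add]; congr 1; omega
  rw [smul_eq_mul, hpow, ← mul_div_assoc, mul_div_mul_left _ _ (by positivity),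
    Real.norm_of_nonneg (by positivity)]
  exact min_one_sq_div_sq_le y

lemma sq_le_max_mul_min_one_sq {a c r : ℝ} (ha : 0 ≤ a) (ha2 : a ≤ 2) (hac : a ≤ c * r) :
    a ^ 2 ≤ max 4 (c ^ 2) * min 1 (r ^ 2) := by
  rcases le_total 1 (r ^ 2) with h | h
  · rw [min_eq_left h, mul_one]
    exact (pow_le_pow_left₀ ha ha2 2).trans (by norm_num)
  · rw [min_eq_right h]
    calc a ^ 2 ≤ (c * r) ^ 2 := pow_le_pow_left₀ ha hac 2
      _ = c ^ 2 * r ^ 2 := mul_pow c r 2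
      _ ≤ max 4 (c ^ 2) * r ^ 2 := by gcongr; exact le_max_right _ _

section CharFun

variable {E : Type*} [NormedAddCommGroup E] [InnerProductSpace ℝ E] [MeasurableSpace E]
  [OpensMeasurableSpace E] {ν : Measure E} [IsProbabilityMeasure ν]

lemma norm_charFun_sub_one_le (h : Integrable (‖·‖) ν) (t : E) :
    ‖charFun ν t - 1‖ ≤ ‖t‖ * ∫ x, ‖x‖ ∂ν := by
  have hexp : Integrable (fun x => exp (⟪x, t⟫ * I)) ν :=
    (integrable_const (1 : ℝ)).mono' (by fun_prop) (ae_of_all _ fun x => by simp)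
  have hsub : charFun ν t - 1 = ∫ x, (exp (⟪x, t⟫ * I) - 1) ∂ν := by
    rw [integral_sub hexp (integrable_const 1), charFun_apply, integral_const, probReal_univ,
      one_smul]
  rw [hsub, ← integral_const_mul]
  refine norm_integral_le_of_norm_le (h.const_mul _) (ae_of_all _ fun x => ?_)
  calc ‖exp (⟪x, t⟫ * I) - 1‖ ≤ ‖⟪x, t⟫‖ := by
        rw [mul_comm]; exact Real.norm_exp_I_mul_ofReal_sub_one_le
    _ ≤ ‖t‖ * ‖x‖ := by rw [mul_comm]; exact norm_inner_le_norm x t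

end CharFun

section CharF

variable {Ω : Type*} [MeasurableSpace Ω] {μ : Measure Ω} {ι : Type*} [Fintype ι]
  {Y : Ω → EuclideanSpace ℝ ι}

lemma charF_eq_charFun_map (hY : Measurable Y) : charF μ Y = charFun (μ.map Y) := by
  ext t
  rw [charFun_apply, integral_map hY.aemeasurable (by fun_prop)]
  simp_rw [real_inner_comm]
  rfl

variable [IsProbabilityMeasure μ]

lemma norm_charF_le_one (hY : Measurable Y) (t : EuclideanSpace ℝ ι) : ‖charF μ Y t‖ ≤ 1 := by
  have := Measure.isProbabilityMeasure_map (μ := μ) hY.aemeasurable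
  rw [charF_eq_charFun_map hY]
  exact norm_charFun_le_one t

lemma norm_charF_sub_one_le (hY : Measurable Y) (hint : Integrable (fun ω => ‖Y ω‖) μ)
    (t : EuclideanSpace ℝ ι) : ‖charF μ Y t - 1‖ ≤ ‖t‖ * ∫ ω, ‖Y ω‖ ∂μ := by
  have := Measure.isProbabilityMeasure_map (μ := μ) hY.aemeasurable
  rw [charF_eq_charFun_map hY, ← integral_map hY.aemeasurable (by fun_prop)]
  exact norm_charFun_sub_one_le
    ((integrable_map_measure (by fun_prop) hY.aemeasurable).2 hint) t

lemma continuous_charF (hY : Measurable Y) : Continuous (charF μ Y) := by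
  have := Measure.isProbabilityMeasure_map (μ := μ) hY.aemeasurable
  rw [charF_eq_charFun_map hY]
  exact continuous_charFun

end CharF

lemma Kconst_pos (q : ℕ) : 0 < Kconst q :=
  div_pos (Real.rpow_pos_of_pos Real.pi_pos _) (Real.Gamma_pos_of_pos (by positivity))

lemma w1_nonneg {d : ℕ} {p : Fin d → ℕ} (t : Vec d p) : 0 ≤ w1 d p t :=
  inv_nonneg.mpr (mul_nonneg (Kconst_pos _).le (by positivity))

lemma finrank_vec (d : ℕ) (p : Fin d → ℕ) : Module.finrank ℝ (Vec d p) = ∑ j, p j := by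
  simp [Fintype.card_sigma]

lemma continuous_comp {d : ℕ} {p : Fin d → ℕ} (j : Fin d) :
    Continuous fun x : Vec d p => comp x j := by
  unfold comp; fun_prop

lemma norm_comp_le {d : ℕ} {p : Fin d → ℕ} (x : Vec d p) (j : Fin d) : ‖comp x j‖ ≤ ‖x‖ := by
  simp only [EuclideanSpace.norm_eq, comp, Fintype.sum_sigma]
  gcongr
  exact Finset.single_le_sum (f := fun j => ∑ i : Fin (p j), ‖x ⟨j, i⟩‖ ^ 2)
    (fun _ _ => by positivity) (Finset.mem_univ j)

section CharProd

variable {Ω : Type*} [MeasurableSpace Ω] {μ : Measure Ω} [IsProbabilityMeasure μ]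
  {d : ℕ} {p : Fin d → ℕ} {X : Ω → Vec d p}

lemma norm_charProd_le_one (hX : Measurable X) (t : Vec d p) : ‖charProd μ X t‖ ≤ 1 := by
  rw [charProd, norm_prod]
  exact Finset.prod_le_one (fun _ _ => norm_nonneg _)
    fun j _ => norm_charF_le_one ((continuous_comp j).measurable.comp hX) _

lemma norm_charProd_sub_one_le (hX : Measurable X) (hint : Integrable (fun ω => ‖X ω‖) μ)
    (t : Vec d p) : ‖charProd μ X t - 1‖ ≤ d * (‖t‖ * ∫ ω, ‖X ω‖ ∂μ) := by
  have hXj (j : Fin d) : Measurable fun ω => comp (X ω) j :=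
    (continuous_comp j).measurable.comp hX
  have hintj (j : Fin d) : Integrable (fun ω => ‖comp (X ω) j‖) μ :=
    hint.mono' (hXj j).norm.aestronglyMeasurable
      (ae_of_all _ fun ω => (norm_norm _).trans_le (norm_comp_le _ j))
  calc ‖charProd μ X t - 1‖
      ≤ ∑ j, ‖charF μ (fun ω => comp (X ω) j) (comp t j) - 1‖ :=
        norm_prod_sub_one_le_sum _ fun j _ => norm_charF_le_one (hXj j) _
    _ ≤ ∑ _j : Fin d, ‖t‖ * ∫ ω, ‖X ω‖ ∂μ := by
        refine Finset.sum_le_sum fun j _ => (norm_charF_sub_one_le (hXj j) (hintj j) _).trans ?_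
        exact mul_le_mul (norm_comp_le t j)
          (integral_mono (hintj j) hint fun ω => norm_comp_le _ j)
          (integral_nonneg fun _ => norm_nonneg _) (norm_nonneg _)
    _ = d * (‖t‖ * ∫ ω, ‖X ω‖ ∂μ) := by simp

lemma continuous_charProd (hX : Measurable X) : Continuous (charProd μ X) :=
  continuous_finsetProd _ fun j _ =>
    (continuous_charF ((continuous_comp j).measurable.comp hX)).comp (continuous_comp j)

lemma norm_charF_sub_charProd_le_two (hX : Measurable X) (t : Vec d p) :
    ‖charF μ X t - charProd μ X t‖ ≤ 2 :=
  calc ‖charF μ X t - charProd μ X t‖ ≤ ‖charF μ X t‖ + ‖charProd μ X t‖ := norm_sub_le _ _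
    _ ≤ 1 + 1 := add_le_add (norm_charF_le_one hX t) (norm_charProd_le_one hX t)
    _ = 2 := one_add_one_eq_two

lemma norm_charF_sub_charProd_le (hX : Measurable X) (hint : Integrable (fun ω => ‖X ω‖) μ)
    (t : Vec d p) :
    ‖charF μ X t - charProd μ X t‖ ≤ ((d + 1) * ∫ ω, ‖X ω‖ ∂μ) * ‖t‖ :=
  calc ‖charF μ X t - charProd μ X t‖ = ‖(charF μ X t - 1) - (charProd μ X t - 1)‖ := by
        rw [sub_sub_sub_cancel_right]
    _ ≤ ‖charF μ X t - 1‖ + ‖charProd μ X t - 1‖ := norm_sub_le _ _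
    _ ≤ ‖t‖ * ∫ ω, ‖X ω‖ ∂μ + d * (‖t‖ * ∫ ω, ‖X ω‖ ∂μ) :=
        add_le_add (norm_charF_sub_one_le hX hint t) (norm_charProd_sub_one_le hX hint t)
    _ = ((d + 1) * ∫ ω, ‖X ω‖ ∂μ) * ‖t‖ := by ring

end CharProd

theorem statement1_general {Ω : Type*} [MeasurableSpace Ω] (μ : Measure Ω) [IsProbabilityMeasure μ]
    {d : ℕ} {p : Fin d → ℕ}
    (X : Ω → Vec d p) (hmX : Measurable X)
    (hint : Integrable (fun ω => ‖X ω‖) μ) :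
    Integrable (fun t : Vec d p => ‖charF μ X t - charProd μ X t‖ ^ 2 * w1 d p t) volume ∧
    0 ≤ Qmeas μ X := by
  set M := max 4 (((d + 1) * ∫ ω, ‖X ω‖ ∂μ) ^ 2)
  have hbound (t : Vec d p) : ‖charF μ X t - charProd μ X t‖ ^ 2 * w1 d p t ≤
      M / Kconst (∑ j, p j) * (min 1 (‖t‖ ^ 2) / ‖t‖ ^ (Module.finrank ℝ (Vec d p) + 1)) := by
    rw [finrank_vec, w1, mul_inv, div_mul_div_comm, div_eq_mul_inv, mul_inv]
    gcongr
    · exact mul_nonneg (inv_nonneg.2 (Kconst_pos _).le) (by positivity)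
    · exact sq_le_max_mul_min_one_sq (norm_nonneg _) (norm_charF_sub_charProd_le_two hmX t)
        (norm_charF_sub_charProd_le hmX hint t)
  have hnonneg (t : Vec d p) : 0 ≤ ‖charF μ X t - charProd μ X t‖ ^ 2 * w1 d p t :=
    mul_nonneg (sq_nonneg _) (w1_nonneg t)
  have hw1 : Measurable (w1 d p) := by unfold w1; fun_prop
  refine ⟨((integrable_min_one_sq_div_norm_pow volume).const_mul
    (M / Kconst (∑ j, p j))).mono' ?_ ?_, integral_nonneg hnonneg⟩
  · exact (((continuous_charF hmX).sub (continuous_charProd hmX)).norm.pow 2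
      ).aestronglyMeasurable.mul hw1.aestronglyMeasurable
  · exact ae_of_all _ fun t => (Real.norm_of_nonneg (hnonneg t)).trans_le (hbound t)

/-- If `E|X| < ∞`, then `Q(X)` is finite (the defining integrand is integrable)
and nonnegative. -/
theorem statement1 {Ω : Type*} [MeasurableSpace Ω] (μ : Measure Ω) [IsProbabilityMeasure μ]
    {d : ℕ} (hd : 1 ≤ d) {p : Fin d → ℕ} (hp : ∀ j, 1 ≤ p j)
    (X : Ω → Vec d p) (hmX : Measurable X)
    (hint : Integrable (fun ω => ‖X ω‖) μ) :
    Integrable (fun t : Vec d p => ‖charF μ X t - charProd μ X t‖ ^ 2 * w1 d p t) volume ∧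
    0 ≤ Qmeas μ X :=
  statement1_general μ X hmX hint
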